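/- arXiv:0802.3596 — 4 statements merged into one kernel-verified Lean document; each statement's English description precedes it below -/
import Mathlib

section
/- Let U, U' ⊆ ℝ^p × ℝ^q be open sets and let F = (F₁,F₂) : U → U' be a C^∞ diffeomorphism with F₂(x,0) = 0 whenever (x,0) ∈ U. Then the function F̃ defined by F̃(x,ξ,t) = (F₁(x,tξ), (1/t)·F₂(x,tξ), t) for t ≠ 0 and F̃(x,ξ,0) = (F₁(x,0), (∂F₂/∂ξ)(x,0)·ξ, 0) maps Ω_V^U into Ω_{V'}^{U'} and is a C^∞ map on Ω_V^U (in the sense of ContDiffOn, with one-sided derivatives in t at the boundary). -/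
open Set MeasureTheory

noncomputable section

/-- Points of `ℝ^p × ℝ^N × [0,1]` (the interval condition is imposed via the set `Omega`). -/
abbrev Pt (p N : ℕ) := (Fin p → ℝ) × (Fin N → ℝ) × ℝ

/-- `Ω_V^U = {(x,ξ,t) ∈ ℝ^p × ℝ^N × [0,1] : (x, tξ) ∈ U}`. -/
def Omega {p N : ℕ} (U : Set ((Fin p → ℝ) × (Fin N → ℝ))) : Set (Pt p N) :=
  {z | z.2.2 ∈ Icc (0 : ℝ) 1 ∧ (z.1, z.2.2 • z.2.1) ∈ U}

/-- Directional derivative within a set `s`, as an operator on functions. -/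
def mder {p N : ℕ} (s : Set (Pt p N)) (v : Pt p N) (g : Pt p N → ℂ) : Pt p N → ℂ :=
  fun z => fderivWithin ℝ g s z v

/-- Coordinate direction in the `x`-variables. -/
def ex {p N : ℕ} (i : Fin p) : Pt p N := (Pi.single i 1, 0, 0)

/-- Coordinate direction in the fiber (`ξ`) variables. -/
def efib {p N : ℕ} (j : Fin N) : Pt p N := (0, Pi.single j 1, 0)

/-- Coordinate direction in the `t`-variable. -/
def et {p N : ℕ} : Pt p N := (0, 0, 1)

/-- The mixed partial derivative `∂_x^l ∂_ξ^α ∂_t^m g` taken within the set `s`. -/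
def mixedD {p N : ℕ} (s : Set (Pt p N)) (l : Fin p → ℕ) (α : Fin N → ℕ) (m : ℕ)
    (g : Pt p N → ℂ) : Pt p N → ℂ :=
  (List.ofFn fun i : Fin p => (mder s (ex i))^[l i]).foldr (· ∘ ·) id <|
    (List.ofFn fun j : Fin N => (mder s (efib j))^[α j]).foldr (· ∘ ·) id <|
      (mder s et)^[m] g

/-- `K` is a conic compact subset of `U × [0,1]` relative to `V = {x : (x,0) ∈ U}`:
it is compact, contained in `U × [0,1]`, and its points over `t = 0` have vanishing
fiber component (i.e. `K ∩ (U × {0}) ⊆ (V × {0}) × {0}`). -/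
def ConicCompact {p N : ℕ} (U : Set ((Fin p → ℝ) × (Fin N → ℝ))) (K : Set (Pt p N)) : Prop :=
  IsCompact K ∧ (∀ z ∈ K, (z.1, z.2.1) ∈ U ∧ z.2.2 ∈ Icc (0 : ℝ) 1) ∧
    ∀ z ∈ K, z.2.2 = 0 → z.2.1 = 0

/-- `g` has conic compact support: there is a conic compact `K` relative to `V` such
that `g(x,ξ,t) = 0` whenever `t ≠ 0` and `(x, tξ, t) ∉ K`. -/
def HasConicSupport {p N : ℕ} (U : Set ((Fin p → ℝ) × (Fin N → ℝ))) (g : Pt p N → ℂ) : Prop :=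
  ∃ K, ConicCompact U K ∧
    ∀ z ∈ Omega U, z.2.2 ≠ 0 → (z.1, z.2.2 • z.2.1, z.2.2) ∉ K → g z = 0

/-- The rapid decay condition `(s1)`: all mixed partial derivatives are dominated by
arbitrary negative powers of `1 + ‖ξ‖²`, uniformly on `Ω_V^U`. -/
def RapidDecay {p N : ℕ} (U : Set ((Fin p → ℝ) × (Fin N → ℝ))) (g : Pt p N → ℂ) : Prop :=
  ∀ (k m : ℕ) (l : Fin p → ℕ) (α : Fin N → ℕ), ∃ C > 0, ∀ z ∈ Omega U,
    (1 + ‖z.2.1‖ ^ 2) ^ k * ‖mixedD (Omega U) l α m g z‖ ≤ C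

/-- `g ∈ S_{r,c}(Ω_V^U)`: smooth on `Ω_V^U`, conic compact support, rapid decay `(s1)`. -/
def MemSrc {p N : ℕ} (U : Set ((Fin p → ℝ) × (Fin N → ℝ))) (g : Pt p N → ℂ) : Prop :=
  ContDiffOn ℝ (⊤ : ℕ∞) g (Omega U) ∧ HasConicSupport U g ∧ RapidDecay U g

/-- For a diffeomorphism `F = (F₁,F₂)` with `F₂(x,0) = 0`, the induced map
`F̃(x,ξ,t) = (F₁(x,tξ), (1/t)F₂(x,tξ), t)` for `t ≠ 0` and
`F̃(x,ξ,0) = (F₁(x,0), (∂F₂/∂ξ)(x,0)·ξ, 0)`. -/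
noncomputable def Ftilde {p q : ℕ}
    (F : (Fin p → ℝ) × (Fin q → ℝ) → (Fin p → ℝ) × (Fin q → ℝ)) : Pt p q → Pt p q :=
  fun z =>
    if z.2.2 = 0 then
      ((F (z.1, 0)).1, fderiv ℝ (fun ξ : Fin q → ℝ => (F (z.1, ξ)).2) 0 z.2.1, 0)
    else
      ((F (z.1, z.2.2 • z.2.1)).1, z.2.2⁻¹ • (F (z.1, z.2.2 • z.2.1)).2, z.2.2)

/-! Hadamard's lemma: since `F₂(x, 0) = 0`, `t⁻¹ F₂(x, tξ) = ∫₀¹ ∂_ξF₂(x, stξ) ξ ds` as soon as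
the segment from `(x, 0)` to `(x, tξ)` lies in `U`. The right-hand side makes sense also at
`t = 0`, where it is `∂_ξF₂(x, 0) ξ`, and it is smooth in `(x, ξ, t)` on the open set of such
points by differentiation under the integral sign. Away from `t = 0` the formula defining `F̃`
is smooth as it stands, and the two open sets together cover `Ω_V^U`. -/

open scoped ContDiff

universe u

section ParametricIntegral

-- One universe for `P` and `E`: the induction below replaces `E` by `P →L[ℝ] E`.
variable {P E : Type u} [NormedAddCommGroup P] [NormedSpace ℝ P] [ProperSpace P]
  [NormedAddCommGroup E] [NormedSpace ℝ E]
  {O : Set (ℝ × P)} {W : Set P} {a b : ℝ} {k : ℝ × P → E}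

theorem hasFDerivAt_intervalIntegral_of_contDiffOn (hk : ContDiffOn ℝ 1 k O) (hO : IsOpen O)
    (hW : IsOpen W) (hWO : uIcc a b ×ˢ W ⊆ O) {w₀ : P} (hw₀ : w₀ ∈ W) :
    HasFDerivAt (fun w => ∫ s in a..b, k (s, w))
      (∫ s in a..b, fderiv ℝ k (s, w₀) ∘L ContinuousLinearMap.inr ℝ ℝ P) w₀ := by
  obtain ⟨ε, hε, hεW⟩ := Metric.nhds_basis_closedBall.mem_iff.1 (hW.mem_nhds hw₀)
  have hKO : uIcc a b ×ˢ Metric.closedBall w₀ ε ⊆ O := (prod_mono subset_rfl hεW).trans hWO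
  have hmaps : ∀ w ∈ Metric.closedBall w₀ ε, MapsTo (fun s => (s, w)) (uIoc a b) O :=
    fun w hw s hs => hKO ⟨uIoc_subset_uIcc hs, hw⟩
  have hk' : ContinuousOn (fun y => fderiv ℝ k y ∘L ContinuousLinearMap.inr ℝ ℝ P) O :=
    (hk.continuousOn_fderiv_of_isOpen hO le_rfl).clm_comp continuousOn_const
  obtain ⟨M, hM⟩ := ((isCompact_uIcc.prod (isCompact_closedBall w₀ ε))).exists_bound_of_continuousOn
    (hk'.mono hKO)
  have hball : Metric.ball w₀ ε ∈ nhds w₀ := Metric.ball_mem_nhds w₀ hε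
  refine intervalIntegral.hasFDerivAt_integral_of_dominated_of_fderiv_le (μ := volume)
    (F' := fun w s => fderiv ℝ k (s, w) ∘L ContinuousLinearMap.inr ℝ ℝ P) (bound := fun _ => M)
    hball ?_ ?_ ?_ ?_ intervalIntegrable_const ?_
  · filter_upwards [hball] with w hw
    exact (hk.continuousOn.comp (by fun_prop) (hmaps w (Metric.ball_subset_closedBall hw)))
      |>.aestronglyMeasurable measurableSet_uIoc
  · refine (hk.continuousOn.comp (by fun_prop) ?_).intervalIntegrable
    exact fun s hs => hKO ⟨hs, Metric.mem_closedBall_self hε.le⟩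
  · exact (hk'.comp (by fun_prop) (hmaps w₀ (Metric.mem_closedBall_self hε.le)))
      |>.aestronglyMeasurable measurableSet_uIoc
  · exact ae_of_all _ fun s hs w hw =>
      hM _ ⟨uIoc_subset_uIcc hs, Metric.ball_subset_closedBall hw⟩
  · refine ae_of_all _ fun s hs w hw => ?_
    have hsw : (s, w) ∈ O := hmaps w (Metric.ball_subset_closedBall hw) hs
    exact ((hk.differentiableOn one_ne_zero).differentiableAt (hO.mem_nhds hsw)).hasFDerivAt.comp w
      (hasFDerivAt_prodMk_right s w)

theorem contDiffOn_intervalIntegral_of_contDiffOn (hk : ContDiffOn ℝ ∞ k O) (hO : IsOpen O)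
    (hW : IsOpen W) (hWO : uIcc a b ×ˢ W ⊆ O) :
    ContDiffOn ℝ ∞ (fun w => ∫ s in a..b, k (s, w)) W := by
  refine contDiffOn_infty.2 fun n => ?_
  induction n generalizing E k with
  | zero =>
    exact contDiffOn_zero.2 fun w hw => (hasFDerivAt_intervalIntegral_of_contDiffOn
      (hk.of_le (by simp)) hO hW hWO hw).continuousAt.continuousWithinAt
  | succ n ih =>
    have hderiv := fun w (hw : w ∈ W) => hasFDerivAt_intervalIntegral_of_contDiffOn
      (hk.of_le (by simp)) hO hW hWO hw
    rw [Nat.cast_add, Nat.cast_one, contDiffOn_succ_iff_fderiv_of_isOpen hW]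
    refine ⟨fun w hw => (hderiv w hw).differentiableAt.differentiableWithinAt, by simp, ?_⟩
    refine (ih (k := fun y => fderiv ℝ k y ∘L ContinuousLinearMap.inr ℝ ℝ P) ?_).congr
      fun w hw => (hderiv w hw).fderiv
    exact (hk.fderiv_of_isOpen hO (by simp)).clm_comp contDiffOn_const

end ParametricIntegral

theorem DifferentiableAt.fderiv_comp_prodMk_right {E E' F : Type*} [NormedAddCommGroup E]
    [NormedSpace ℝ E] [NormedAddCommGroup E'] [NormedSpace ℝ E'] [NormedAddCommGroup F]
    [NormedSpace ℝ F] {f : E × E' → F} {x : E} {y : E'} (hf : DifferentiableAt ℝ f (x, y)) :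
    fderiv ℝ (fun η => f (x, η)) y = fderiv ℝ f (x, y) ∘L ContinuousLinearMap.inr ℝ E E' :=
  (hf.hasFDerivAt.comp y (hasFDerivAt_prodMk_right x y)).fderiv

section RadialDomain

variable {E E' : Type*} [NormedAddCommGroup E'] [NormedSpace ℝ E']
  {U : Set (E × E')}

def radialDomain (U : Set (E × E')) : Set (E × E' × ℝ) :=
  {z | ∀ s ∈ Icc (0 : ℝ) 1, (z.1, (s * z.2.2) • z.2.1) ∈ U}

theorem isOpen_radialDomain [TopologicalSpace E] (hU : IsOpen U) : IsOpen (radialDomain U) := by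
  refine isOpen_iff_mem_nhds.2 fun z hz => isCompact_Icc.eventually_forall_of_forall_eventually
    fun s hs => ?_
  have hcont : Continuous fun y : (E × E' × ℝ) × ℝ => (y.1.1, (y.2 * y.1.2.2) • y.1.2.1) := by
    fun_prop
  exact (hU.preimage hcont).mem_nhds (hz s hs)

theorem mem_radialDomain_of_mem {x : E} (ξ : E') (hx : (x, 0) ∈ U) :
    (x, ξ, 0) ∈ radialDomain U := by
  simpa [radialDomain] using fun _ _ _ => hx

end RadialDomain

section HadamardQuotient

variable {E E' F : Type u} [NormedAddCommGroup E] [NormedSpace ℝ E]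
  [NormedAddCommGroup E'] [NormedSpace ℝ E'] [NormedAddCommGroup F] [NormedSpace ℝ F]
  {U : Set (E × E')} {f : E × E' → F}

def hadamardQuotient (f : E × E' → F) (z : E × E' × ℝ) : F :=
  ∫ s in (0 : ℝ)..1, fderiv ℝ f (z.1, (s * z.2.2) • z.2.1) (0, z.2.1)

theorem hadamardQuotient_zero [CompleteSpace F] (x : E) (ξ : E') :
    hadamardQuotient f (x, ξ, 0) = fderiv ℝ f (x, 0) (0, ξ) := by
  simp [hadamardQuotient, intervalIntegral.integral_const]

theorem contDiffOn_hadamardQuotient [ProperSpace E] [ProperSpace E'] (hU : IsOpen U)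
    (hf : ContDiffOn ℝ ∞ f U) : ContDiffOn ℝ ∞ (hadamardQuotient f) (radialDomain U) := by
  set path := fun y : ℝ × E × E' × ℝ => (y.2.1, (y.1 * y.2.2.2) • y.2.2.1)
  have hpath : ContDiff ℝ ∞ path := by fun_prop
  have hk : ContDiffOn ℝ ∞ (fun y => fderiv ℝ f (path y) (0, y.2.2.1)) (path ⁻¹' U) :=
    ((hf.fderiv_of_isOpen hU (by simp)).comp hpath.contDiffOn fun _ h => h).clm_apply
      (by fun_prop)
  exact contDiffOn_intervalIntegral_of_contDiffOn hk (hU.preimage hpath.continuous)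
    (isOpen_radialDomain hU) fun y ⟨hs, hz⟩ => hz y.1 (by simpa using hs)

theorem smul_hadamardQuotient [CompleteSpace F] (hU : IsOpen U) (hf : ContDiffOn ℝ 1 f U)
    {z : E × E' × ℝ} (hz : z ∈ radialDomain U) :
    z.2.2 • hadamardQuotient f z = f (z.1, z.2.2 • z.2.1) - f (z.1, 0) := by
  obtain ⟨x, ξ, t⟩ := z
  have h := map_add_eq_sum_add_integral_iteratedFDeriv (n := 0) (f := f) (x := (x, 0))
    (y := (0, t • ξ)) fun s hs => hf.contDiffAt (hU.mem_nhds (by simpa [smul_smul] using hz s hs))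
  simp only [Nat.reduceAdd, zero_add, Prod.mk_add_mk, add_zero, Prod.smul_mk, smul_zero, smul_smul,
    Finset.range_one, Finset.sum_singleton, Nat.factorial_zero, Nat.cast_one, inv_one, one_smul,
    pow_zero, iteratedFDeriv_zero_apply, iteratedFDeriv_one_apply] at h
  rw [h, add_sub_cancel_left, hadamardQuotient, ← intervalIntegral.integral_smul]
  simp only [← ContinuousLinearMap.map_smul, Prod.smul_mk, smul_zero]

end HadamardQuotient

section Ftilde

variable {p q : ℕ} {U U' : Set ((Fin p → ℝ) × (Fin q → ℝ))}
  {F : (Fin p → ℝ) × (Fin q → ℝ) → (Fin p → ℝ) × (Fin q → ℝ)}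

theorem Ftilde_zero (x : Fin p → ℝ) (ξ : Fin q → ℝ) :
    Ftilde F (x, ξ, 0) = ((F (x, 0)).1, fderiv ℝ (fun η => (F (x, η)).2) 0 ξ, 0) :=
  if_pos rfl

theorem Ftilde_of_ne_zero (x : Fin p → ℝ) (ξ : Fin q → ℝ) {t : ℝ} (ht : t ≠ 0) :
    Ftilde F (x, ξ, t) = ((F (x, t • ξ)).1, t⁻¹ • (F (x, t • ξ)).2, t) :=
  if_neg ht

theorem mapsTo_Ftilde (hFU : MapsTo F U U') (hF2 : ∀ x, (x, 0) ∈ U → (F (x, 0)).2 = 0) :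
    MapsTo (Ftilde F) (Omega U) (Omega U') := by
  rintro ⟨x, ξ, t⟩ ⟨ht, hxU⟩
  rcases eq_or_ne t 0 with rfl | ht0
  · have hx0 : (x, 0) ∈ U := by simpa using hxU
    refine ⟨by simp [Ftilde_zero], ?_⟩
    convert hFU hx0 using 1
    simp only [Ftilde_zero, zero_smul]
    exact Prod.ext rfl (hF2 x hx0).symm
  · refine ⟨by simpa [Ftilde_of_ne_zero x ξ ht0] using ht, ?_⟩
    simpa [Ftilde_of_ne_zero x ξ ht0, smul_smul, ht0] using hFU hxU

theorem Ftilde_eqOn_radialDomain (hU : IsOpen U) (hF : ContDiffOn ℝ 1 F U)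
    (hF2 : ∀ x, (x, 0) ∈ U → (F (x, 0)).2 = 0) :
    EqOn (Ftilde F) (fun z => ((F (z.1, z.2.2 • z.2.1)).1,
      hadamardQuotient (fun w => (F w).2) z, z.2.2)) (radialDomain U) := by
  rintro ⟨x, ξ, t⟩ hz
  dsimp only
  have hx0 : (x, 0) ∈ U := by simpa using hz 0 (by simp)
  rcases eq_or_ne t 0 with rfl | ht
  · have hdiff : DifferentiableAt ℝ (fun w => (F w).2) (x, 0) :=
      ((hF.differentiableOn one_ne_zero).differentiableAt (hU.mem_nhds hx0)).snd
    rw [Ftilde_zero, hadamardQuotient_zero, hdiff.fderiv_comp_prodMk_right]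
    simp
  · rw [Ftilde_of_ne_zero x ξ ht]
    have h := smul_hadamardQuotient hU hF.snd hz
    simp only [hF2 x hx0, sub_zero] at h
    simp [← h, inv_smul_smul₀ ht]

theorem contDiffOn_Ftilde_radialDomain (hU : IsOpen U) (hF : ContDiffOn ℝ ∞ F U)
    (hF2 : ∀ x, (x, 0) ∈ U → (F (x, 0)).2 = 0) :
    ContDiffOn ℝ ∞ (Ftilde F) (radialDomain U) := by
  have hmaps : MapsTo (fun z : Pt p q => (z.1, z.2.2 • z.2.1)) (radialDomain U) U :=
    fun z hz => by simpa using hz 1 (by simp)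
  refine ContDiffOn.congr ?_ (Ftilde_eqOn_radialDomain hU (hF.of_le (by simp)) hF2)
  exact (hF.comp (by fun_prop) hmaps).fst.prodMk
    ((contDiffOn_hadamardQuotient hU hF.snd).prodMk (by fun_prop))

theorem contDiffOn_Ftilde_of_ne_zero (hF : ContDiffOn ℝ ∞ F U) :
    ContDiffOn ℝ ∞ (Ftilde F) ({z | z.2.2 ≠ 0} ∩ (fun z => (z.1, z.2.2 • z.2.1)) ⁻¹' U) := by
  have hF' : ContDiffOn ℝ ∞ (fun z : Pt p q => F (z.1, z.2.2 • z.2.1))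
      ({z | z.2.2 ≠ 0} ∩ (fun z => (z.1, z.2.2 • z.2.1)) ⁻¹' U) :=
    hF.comp (by fun_prop) fun _ hz => hz.2
  refine ContDiffOn.congr ?_ fun z hz => Ftilde_of_ne_zero z.1 z.2.1 hz.1
  exact hF'.fst.prodMk (((contDiffOn_snd.snd.inv fun _ hz => hz.1).smul hF'.snd).prodMk
    (by fun_prop))

end Ftilde

theorem stmt3_general {p q : ℕ} (U U' : Set ((Fin p → ℝ) × (Fin q → ℝ)))
    (hU : IsOpen U)
    (F : (Fin p → ℝ) × (Fin q → ℝ) → (Fin p → ℝ) × (Fin q → ℝ))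
    (hF : ContDiffOn ℝ (⊤ : ℕ∞) F U)
    (hFU : F '' U = U')
    (hF2 : ∀ x : Fin p → ℝ, (x, (0 : Fin q → ℝ)) ∈ U → (F (x, 0)).2 = 0) :
    MapsTo (Ftilde F) (Omega U) (Omega U') ∧
      ContDiffOn ℝ (⊤ : ℕ∞) (Ftilde F) (Omega U) := by
  refine ⟨mapsTo_Ftilde (hFU ▸ mapsTo_image F U) hF2, ?_⟩
  have hW : IsOpen ({z : Pt p q | z.2.2 ≠ 0} ∩ (fun z => (z.1, z.2.2 • z.2.1)) ⁻¹' U) :=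
    (isOpen_ne_fun (by fun_prop) continuous_const).inter (hU.preimage (by fun_prop))
  refine ((contDiffOn_Ftilde_radialDomain hU hF hF2).union_of_isOpen
    (contDiffOn_Ftilde_of_ne_zero hF) (isOpen_radialDomain hU) hW).mono ?_
  rintro ⟨x, ξ, t⟩ ⟨-, hxU⟩
  rcases eq_or_ne t 0 with rfl | ht
  · exact Or.inl (mem_radialDomain_of_mem ξ (by simpa using hxU))
  · exact Or.inr ⟨ht, hxU⟩

/-- Lemma 3.4 of the paper: for a `C^∞` diffeomorphism `F : U → U'` with
`F₂(x,0) = 0`, the map `F̃` sends `Ω_V^U` into `Ω_{V'}^{U'}` and is `C^∞` on `Ω_V^U`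
(in the sense of `ContDiffOn`, with one-sided derivatives in `t` at the boundary). -/
theorem stmt3 {p q : ℕ} (U U' : Set ((Fin p → ℝ) × (Fin q → ℝ)))
    (hU : IsOpen U) (hU' : IsOpen U')
    (F G : (Fin p → ℝ) × (Fin q → ℝ) → (Fin p → ℝ) × (Fin q → ℝ))
    (hF : ContDiffOn ℝ (⊤ : ℕ∞) F U) (hG : ContDiffOn ℝ (⊤ : ℕ∞) G U')
    (hFU : F '' U = U') (hGF : ∀ z ∈ U, G (F z) = z) (hFG : ∀ w ∈ U', F (G w) = w)
    (hF2 : ∀ x : Fin p → ℝ, (x, (0 : Fin q → ℝ)) ∈ U → (F (x, 0)).2 = 0) :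
    MapsTo (Ftilde F) (Omega U) (Omega U') ∧
      ContDiffOn ℝ (⊤ : ℕ∞) (Ftilde F) (Omega U) :=
  stmt3_general U U' hU F hF hFU hF2
end
end

section
/- Let B_n be as above, with product (f ⋆ g)(x,ξ,t) = ∫_{ℝ^n} f(x, η, t)·g(x + tη, ξ − η, t) dη. Then ⋆ is associative: for all f, g, h ∈ B_n and all (x,ξ,t) ∈ ℝ^n × ℝ^n × [0,1], ((f ⋆ g) ⋆ h)(x,ξ,t) = (f ⋆ (g ⋆ h))(x,ξ,t). -/
open Set MeasureTheory

noncomputable section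

/-- The convolution product of Connes' tangent groupoid of `ℝ^n` in the global chart
`(x,y,t) ↦ (x,(y−x)/t,t)`: `(f ⋆ g)(x,ξ,t) = ∫_{ℝ^n} f(x,η,t)·g(x+tη, ξ−η, t) dη`. -/
noncomputable def bconv {n : ℕ} (f g : Pt n n → ℂ) : Pt n n → ℂ :=
  fun z => ∫ η : Fin n → ℝ, f (z.1, η, z.2.2) * g (z.1 + z.2.2 • η, z.2.1 - η, z.2.2)

/-! Both iterated products are iterated integrals of
`F(ζ, η) = f(x,η,t) g(x+tη, ζ−η, t) h(x+tζ, ξ−ζ, t)`, in the two orders (for `f ⋆ (g ⋆ h)` after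
substituting `ζ − η` for the inner variable). Rapid decay bounds `‖F(ζ, η)‖` by
`C w(η) w(ζ − η)` with `w = (1 + ‖·‖²)^{-(n+1)}` integrable on `ℝⁿ`, a convolution-type integrand
that is integrable on `ℝⁿ × ℝⁿ`; so Fubini lets us swap the two integrals. -/

theorem mixedD_zero {p N : ℕ} (s : Set (Pt p N)) (g : Pt p N → ℂ) : mixedD s 0 0 0 g = g := by
  have foldr_id :
      ∀ m, (List.replicate m (id : (Pt p N → ℂ) → Pt p N → ℂ)).foldr (· ∘ ·) id = id :=
    fun m => by induction m <;> simp [List.replicate_succ, *]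
  simp [mixedD, foldr_id]

theorem RapidDecay.norm_le {p N : ℕ} {U : Set ((Fin p → ℝ) × (Fin N → ℝ))} {g : Pt p N → ℂ}
    (hg : RapidDecay U g) (k : ℕ) :
    ∃ C, ∀ z ∈ Omega U, ‖g z‖ ≤ C * ((1 + ‖z.2.1‖ ^ 2) ^ k)⁻¹ := by
  obtain ⟨C, -, hC⟩ := hg k 0 0 0
  refine ⟨C, fun z hz => ?_⟩
  rw [← div_eq_mul_inv, le_div_iff₀' (by positivity)]
  simpa only [mixedD_zero] using hC z hz

theorem mem_Omega_univ {p N : ℕ} {z : Pt p N} : z ∈ Omega univ ↔ z.2.2 ∈ Icc (0 : ℝ) 1 := by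
  simp [Omega]

theorem ContinuousOn.continuous_slice {p N : ℕ} {g : Pt p N → ℂ}
    (hg : ContinuousOn g (Omega univ)) {t : ℝ} (ht : t ∈ Icc (0 : ℝ) 1) :
    Continuous fun q : (Fin p → ℝ) × (Fin N → ℝ) => g (q.1, q.2, t) :=
  hg.comp_continuous (by fun_prop) fun _ => mem_Omega_univ.2 ht

theorem integrable_inv_one_add_norm_sq_pow {E : Type*} [NormedAddCommGroup E] [NormedSpace ℝ E]
    [FiniteDimensional ℝ E] [MeasurableSpace E] [BorelSpace E] {μ : Measure E} [μ.IsAddHaarMeasure]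
    {k : ℕ} (hk : Module.finrank ℝ E < 2 * k) :
    Integrable (fun x : E => ((1 + ‖x‖ ^ 2) ^ k)⁻¹) μ := by
  refine (integrable_rpow_neg_one_add_norm_sq (μ := μ) (r := 2 * k) (by exact_mod_cast hk)).congr
    (.of_forall fun x => ?_)
  dsimp only
  rw [neg_div, mul_div_cancel_left₀ _ two_ne_zero, Real.rpow_neg (by positivity), Real.rpow_natCast]

theorem integrable_of_norm_le_convolution_integrand {G E : Type*} [AddGroup G] [MeasurableSpace G]
    [MeasurableAdd₂ G] [MeasurableNeg G] [NormedAddCommGroup E] {μ ν : Measure G} [SFinite μ]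
    [μ.IsAddRightInvariant] [SFinite ν] {F : G × G → E} {a b : G → ℝ} (ha : Integrable a ν)
    (hb : Integrable b μ) (hF : AEStronglyMeasurable F (μ.prod ν))
    (hle : ∀ p, ‖F p‖ ≤ a p.2 * b (p.1 - p.2)) : Integrable F (μ.prod ν) :=
  (ha.convolution_integrand (ContinuousLinearMap.mul ℝ ℝ) hb).mono' hF (.of_forall hle)

/-- At `z = (x, ξ, t)` and `q = (ζ, η)`, the integrand `F(ζ, η)`; the outer variable `ζ` comes
first, as in `Integrable.convolution_integrand`. -/
def bconvTriple {n : ℕ} (f g h : Pt n n → ℂ) (z : Pt n n) (q : (Fin n → ℝ) × (Fin n → ℝ)) : ℂ :=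
  f (z.1, q.2, z.2.2) * g (z.1 + z.2.2 • q.2, q.1 - q.2, z.2.2) *
    h (z.1 + z.2.2 • q.1, z.2.1 - q.1, z.2.2)

theorem bconv_bconv_left {n : ℕ} (f g h : Pt n n → ℂ) (z : Pt n n) :
    bconv (bconv f g) h z = ∫ ζ, ∫ η, bconvTriple f g h z (ζ, η) := by
  refine integral_congr_ae (.of_forall fun ζ => ?_)
  simp only [bconv, bconvTriple, ← integral_mul_const]

theorem bconv_bconv_right {n : ℕ} (f g h : Pt n n → ℂ) (z : Pt n n) :
    bconv f (bconv g h) z = ∫ η, ∫ ζ, bconvTriple f g h z (ζ, η) := by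
  refine integral_congr_ae (.of_forall fun η => ?_)
  simp only [bconv, bconvTriple, ← integral_const_mul]
  rw [← integral_sub_right_eq_self _ η]
  refine integral_congr_ae (.of_forall fun ζ => ?_)
  simp only [add_assoc, ← smul_add, add_sub_cancel, sub_sub_sub_cancel_right, mul_assoc]

theorem integrable_bconvTriple {n : ℕ} {f g h : Pt n n → ℂ}
    (hf : MemSrc (univ : Set ((Fin n → ℝ) × (Fin n → ℝ))) f)
    (hg : MemSrc (univ : Set ((Fin n → ℝ) × (Fin n → ℝ))) g)
    (hh : MemSrc (univ : Set ((Fin n → ℝ) × (Fin n → ℝ))) h) {z : Pt n n}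
    (hz : z.2.2 ∈ Icc (0 : ℝ) 1) :
    Integrable (bconvTriple f g h z) (volume.prod volume) := by
  obtain ⟨x, ξ, t⟩ := z
  set w : (Fin n → ℝ) → ℝ := fun v => ((1 + ‖v‖ ^ 2) ^ (n + 1))⁻¹
  have hw : Integrable w := integrable_inv_one_add_norm_sq_pow (by simp; omega)
  obtain ⟨Cf, hCf⟩ := hf.2.2.norm_le (n + 1)
  obtain ⟨Cg, hCg⟩ := hg.2.2.norm_le (n + 1)
  obtain ⟨Ch, hCh⟩ := hh.2.2.norm_le 0
  have hcont : Continuous (bconvTriple f g h (x, ξ, t)) := by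
    have hf' := (hf.1.continuousOn.continuous_slice hz).comp
      (f := fun q : (Fin n → ℝ) × (Fin n → ℝ) => (x, q.2)) (by fun_prop)
    have hg' := (hg.1.continuousOn.continuous_slice hz).comp
      (f := fun q : (Fin n → ℝ) × (Fin n → ℝ) => (x + t • q.2, q.1 - q.2)) (by fun_prop)
    have hh' := (hh.1.continuousOn.continuous_slice hz).comp
      (f := fun q : (Fin n → ℝ) × (Fin n → ℝ) => (x + t • q.1, ξ - q.1)) (by fun_prop)
    exact (hf'.mul hg').mul hh'
  refine integrable_of_norm_le_convolution_integrand (hw.const_mul Cf) (hw.const_mul (Cg * Ch))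
    hcont.aestronglyMeasurable fun q => ?_
  have hfq : ‖f (x, q.2, t)‖ ≤ Cf * w q.2 := hCf _ (mem_Omega_univ.2 hz)
  have hgq : ‖g (x + t • q.2, q.1 - q.2, t)‖ ≤ Cg * w (q.1 - q.2) := hCg _ (mem_Omega_univ.2 hz)
  have hhq : ‖h (x + t • q.1, ξ - q.1, t)‖ ≤ Ch := by
    simpa only [pow_zero, inv_one, mul_one] using
      hCh (x + t • q.1, ξ - q.1, t) (mem_Omega_univ.2 hz)
  calc ‖bconvTriple f g h (x, ξ, t) q‖
      = ‖f (x, q.2, t)‖ * ‖g (x + t • q.2, q.1 - q.2, t)‖ * ‖h (x + t • q.1, ξ - q.1, t)‖ := by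
        simp only [bconvTriple, norm_mul]
    _ ≤ Cf * w q.2 * (Cg * w (q.1 - q.2)) * Ch := by
        have hf0 : 0 ≤ Cf * w q.2 := (norm_nonneg _).trans hfq
        have hg0 : 0 ≤ Cg * w (q.1 - q.2) := (norm_nonneg _).trans hgq
        gcongr
    _ = Cf * w q.2 * (Cg * Ch * w (q.1 - q.2)) := by ring

/-- associativity part of the main Theorem of the paper for Connes' tangent
groupoid of `ℝ^n`: the product `⋆` on `B_n = MemSrc univ` is associative at every point
`(x,ξ,t) ∈ ℝ^n × ℝ^n × [0,1]`. -/
theorem stmt7 {n : ℕ} (f g h : Pt n n → ℂ)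
    (hf : MemSrc (univ : Set ((Fin n → ℝ) × (Fin n → ℝ))) f)
    (hg : MemSrc (univ : Set ((Fin n → ℝ) × (Fin n → ℝ))) g)
    (hh : MemSrc (univ : Set ((Fin n → ℝ) × (Fin n → ℝ))) h) :
    ∀ z : Pt n n, z.2.2 ∈ Icc (0 : ℝ) 1 →
      bconv (bconv f g) h z = bconv f (bconv g h) z := by
  intro z hz
  rw [bconv_bconv_left, bconv_bconv_right]
  exact integral_integral_swap (integrable_bconvTriple hf hg hh hz)
end
end

section
/- Let g ∈ S_{r,c}(Ω_V^U). Then the evaluation at zero, g₀(x,ξ) := g(x,ξ,0), defined for x ∈ V and ξ ∈ ℝ^q, satisfies: (i) g₀ is C^∞ on V × ℝ^q; (ii) there exists a compact set K₀ ⊆ V such that g₀(x,ξ) = 0 for all x ∉ K₀ and all ξ ∈ ℝ^q; (iii) for all k ∈ ℕ, l ∈ ℕ^p, α ∈ ℕ^q there is C > 0 with (1 + ‖ξ‖²)^k · |∂_x^l ∂_ξ^α g₀(x,ξ)| ≤ C on V × ℝ^q. In other words, the evaluation map e₀ sends S_{r,c}(Ω_V^U) into the Schwartz space 𝒮(V ×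 ℝ^q) of the trivial bundle V × ℝ^q → V. -/
open Set MeasureTheory

noncomputable section

/-- Points of `ℝ^p × ℝ^q` (base × fiber). -/
abbrev Pt2 (p q : ℕ) := (Fin p → ℝ) × (Fin q → ℝ)

/-- Directional derivative within a set `s ⊆ ℝ^p × ℝ^q`, as an operator on functions. -/
def mder2 {p q : ℕ} (s : Set (Pt2 p q)) (v : Pt2 p q) (g : Pt2 p q → ℂ) : Pt2 p q → ℂ :=
  fun w => fderivWithin ℝ g s w v

/-- The mixed partial derivative `∂_x^l ∂_ξ^α g` taken within the set `s ⊆ ℝ^p × ℝ^q`. -/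
def mixedD2 {p q : ℕ} (s : Set (Pt2 p q)) (l : Fin p → ℕ) (α : Fin q → ℕ)
    (g : Pt2 p q → ℂ) : Pt2 p q → ℂ :=
  (List.ofFn fun i : Fin p =>
      (mder2 s ((Pi.single i 1 : Fin p → ℝ), 0))^[l i]).foldr (· ∘ ·) id <|
    (List.ofFn fun j : Fin q =>
      (mder2 s (0, (Pi.single j 1 : Fin q → ℝ)))^[α j]).foldr (· ∘ ·) id g

/-! The three claims are read off at the slice `t = 0` of `Ω_V^U`. Since `U` is open, the slice
`V × ℝ^q` is open, so derivatives of `g₀ = g ∘ ι` (with `ι w = (w, 0)`) in directions of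
`ℝ^p × ℝ^q` are derivatives of `g` in the same directions on `Ω_V^U`; hence `g₀` is smooth and
inherits the bounds `(s1)` with `m = 0`. For the support, take `K₀` to be the projection of
`K ∩ {t = 0}`, which lies in `V` because `K` is conic. If `x ∈ V \ K₀`, then `(x, 0, 0) ∉ K`, so
by closedness `(x, tξ, t) ∉ K` for small `t > 0`; there `g (x, ξ, t) = 0`, and continuity of `g`
at `t = 0` gives `g₀ (x, ξ) = 0`. -/

open Filter Topology

section ZeroSlice

variable {p q : ℕ} {U : Set (Pt2 p q)}

def sliceAtZero (p q : ℕ) : Pt2 p q →L[ℝ] Pt p q :=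
  (ContinuousLinearMap.fst ℝ _ _).prod ((ContinuousLinearMap.snd ℝ _ _).prod 0)

/-- `V × ℝ^q`, where `V = {x : (x, 0) ∈ U}`. -/
def sliceDomain (U : Set (Pt2 p q)) : Set (Pt2 p q) :=
  {w | (w.1, (0 : Fin q → ℝ)) ∈ U}

theorem isOpen_sliceDomain (hU : IsOpen U) : IsOpen (sliceDomain U) :=
  hU.preimage (continuous_fst.prodMk continuous_const)

theorem mapsTo_sliceAtZero : MapsTo (sliceAtZero p q) (sliceDomain U) (Omega U) := by
  intro w hw
  exact ⟨⟨le_rfl, zero_le_one⟩, by simpa [sliceAtZero, sliceDomain] using hw⟩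

theorem uniqueDiffOn_omega (hU : IsOpen U) : UniqueDiffOn ℝ (Omega U) := by
  have hslab : UniqueDiffOn ℝ {z : Pt p q | z.2.2 ∈ Icc (0 : ℝ) 1} := by
    refine uniqueDiffOn_convex ((convex_Icc (0 : ℝ) 1).linear_preimage
      ((LinearMap.snd ℝ _ _).comp (LinearMap.snd ℝ _ _))) ⟨(0, 0, 1 / 2), ?_⟩
    exact mem_interior_iff_mem_nhds.2 <| continuous_snd.snd.continuousAt.preimage_mem_nhds
      (Icc_mem_nhds (by norm_num) (by norm_num))
  have hcone : IsOpen ((fun z : Pt p q => (z.1, z.2.2 • z.2.1)) ⁻¹' U) :=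
    hU.preimage (continuous_fst.prodMk (continuous_snd.snd.smul continuous_snd.fst))
  exact fun z hz => (hslab z hz.1).inter (hcone.mem_nhds hz.2)

def IsZeroSliceOf (U : Set (Pt2 p q)) (G₀ : Pt2 p q → ℂ) (G : Pt p q → ℂ) : Prop :=
  ContDiffOn ℝ (⊤ : ℕ∞) G (Omega U) ∧ EqOn G₀ (G ∘ sliceAtZero p q) (sliceDomain U)

namespace IsZeroSliceOf

variable {G₀ : Pt2 p q → ℂ} {G : Pt p q → ℂ}

theorem mder2_mder (hU : IsOpen U) (h : IsZeroSliceOf U G₀ G) (v : Pt2 p q) :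
    IsZeroSliceOf U (mder2 (sliceDomain U) v G₀) (mder (Omega U) (sliceAtZero p q v) G) := by
  refine ⟨(h.1.fderivWithin (uniqueDiffOn_omega hU) (by simp)).clm_apply contDiffOn_const,
    fun w hw => ?_⟩
  have hG : DifferentiableWithinAt ℝ G (Omega U) (sliceAtZero p q w) :=
    h.1.differentiableOn (by simp) _ (mapsTo_sliceAtZero hw)
  have hcomp := fderivWithin_comp w hG (sliceAtZero p q).differentiableWithinAt
    mapsTo_sliceAtZero ((isOpen_sliceDomain hU).uniqueDiffWithinAt hw)
  simp only [mder2, mder, Function.comp_apply, fderivWithin_congr h.2 (h.2 hw), hcomp,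
    (sliceAtZero p q).fderivWithin ((isOpen_sliceDomain hU).uniqueDiffWithinAt hw),
    ContinuousLinearMap.comp_apply]

theorem iterate (hU : IsOpen U) (h : IsZeroSliceOf U G₀ G) (v : Pt2 p q) (n : ℕ) :
    IsZeroSliceOf U ((mder2 (sliceDomain U) v)^[n] G₀)
      ((mder (Omega U) (sliceAtZero p q v))^[n] G) := by
  induction n with
  | zero => exact h
  | succ n ih =>
    rw [Function.iterate_succ_apply', Function.iterate_succ_apply']
    exact ih.mder2_mder hU v

theorem foldr_iterate (hU : IsOpen U) {n : ℕ} (v : Fin n → Pt2 p q) (c : Fin n → ℕ)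
    (h : IsZeroSliceOf U G₀ G) :
    IsZeroSliceOf U
      ((List.ofFn fun i => (mder2 (sliceDomain U) (v i))^[c i]).foldr (· ∘ ·) id G₀)
      ((List.ofFn fun i => (mder (Omega U) (sliceAtZero p q (v i)))^[c i]).foldr (· ∘ ·) id G) := by
  induction n with
  | zero => exact h
  | succ n ih =>
    simp only [List.ofFn_succ, List.foldr_cons]
    exact (ih (fun i => v i.succ) (fun i => c i.succ)).iterate hU (v 0) (c 0)

theorem mixedD2_eq (hU : IsOpen U) (h : IsZeroSliceOf U G₀ G) (l : Fin p → ℕ) (α : Fin q → ℕ)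
    {w : Pt2 p q} (hw : w ∈ sliceDomain U) :
    mixedD2 (sliceDomain U) l α G₀ w = mixedD (Omega U) l α 0 G (sliceAtZero p q w) :=
  ((h.foldr_iterate hU (fun j => (0, Pi.single j 1)) α).foldr_iterate hU
    (fun i => (Pi.single i 1, 0)) l).2 hw

end IsZeroSliceOf

end ZeroSlice

section ConicSupport

variable {p q : ℕ} {U : Set (Pt2 p q)} {K : Set (Pt p q)}

def baseAtZero (K : Set (Pt p q)) : Set (Fin p → ℝ) :=
  Prod.fst '' (K ∩ {z | z.2.2 = 0})

theorem ConicCompact.isCompact_baseAtZero (hK : ConicCompact U K) :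
    IsCompact (baseAtZero K) :=
  (hK.1.inter_right (isClosed_eq continuous_snd.snd continuous_const)).image continuous_fst

theorem ConicCompact.baseAtZero_subset (hK : ConicCompact U K) {x : Fin p → ℝ}
    (hx : x ∈ baseAtZero K) : (x, (0 : Fin q → ℝ)) ∈ U := by
  obtain ⟨z, ⟨hzK, hz0⟩, rfl⟩ := hx
  simpa [hK.2.2 z hzK hz0] using (hK.2.1 z hzK).1

theorem eventually_notMem_of_notMem_baseAtZero (hK : IsClosed K) {x : Fin p → ℝ}
    (hx : x ∉ baseAtZero K) (ξ : Fin q → ℝ) :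
    ∀ᶠ t in 𝓝 (0 : ℝ), ((x, t • ξ, t) : Pt p q) ∉ K := by
  have h0 : ((x, (0 : ℝ) • ξ, 0) : Pt p q) ∉ K := fun hmem => hx ⟨_, ⟨hmem, rfl⟩, rfl⟩
  exact (by fun_prop : Continuous fun t : ℝ => ((x, t • ξ, t) : Pt p q)).continuousAt
    |>.preimage_mem_nhds (hK.isOpen_compl.mem_nhds h0)

theorem eventually_mem_omega (hU : IsOpen U) {x : Fin p → ℝ}
    (hx : (x, (0 : Fin q → ℝ)) ∈ U) (ξ : Fin q → ℝ) :
    ∀ᶠ t in 𝓝[>] (0 : ℝ), ((x, ξ, t) : Pt p q) ∈ Omega U := by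
  have hcone : ∀ᶠ t in 𝓝 (0 : ℝ), (x, t • ξ) ∈ U :=
    (by fun_prop : Continuous fun t : ℝ => (x, t • ξ)).continuousAt.preimage_mem_nhds
      (hU.mem_nhds (by simpa using hx))
  filter_upwards [nhdsWithin_le_nhds hcone, Ioo_mem_nhdsGT zero_lt_one] with t ht htI
  exact ⟨Ioo_subset_Icc_self htI, ht⟩

theorem apply_zero_eq_zero_of_notMem_baseAtZero (hU : IsOpen U) {g : Pt p q → ℂ}
    (hg : ContinuousOn g (Omega U)) (hK : IsClosed K)
    (hsupp : ∀ z ∈ Omega U, z.2.2 ≠ 0 → (z.1, z.2.2 • z.2.1, z.2.2) ∉ K → g z = 0)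
    {x : Fin p → ℝ} (hx : (x, (0 : Fin q → ℝ)) ∈ U) (hxK : x ∉ baseAtZero K)
    (ξ : Fin q → ℝ) : g (x, ξ, 0) = 0 := by
  have hΩ := eventually_mem_omega hU hx ξ
  have hvanish : ∀ᶠ t in 𝓝[>] (0 : ℝ), g (x, ξ, t) = 0 := by
    filter_upwards [hΩ, nhdsWithin_le_nhds (eventually_notMem_of_notMem_baseAtZero hK hxK ξ),
      self_mem_nhdsWithin] with t htΩ htK (ht : 0 < t)
    exact hsupp _ htΩ ht.ne' htK
  have hpath : Tendsto (fun t : ℝ => ((x, ξ, t) : Pt p q)) (𝓝[>] 0) (𝓝[Omega U] (x, ξ, 0)) :=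
    tendsto_nhdsWithin_iff.2
      ⟨((by fun_prop : Continuous fun t : ℝ => ((x, ξ, t) : Pt p q)).tendsto 0).mono_left
        nhdsWithin_le_nhds, hΩ⟩
  have hg0 := hg _ (mapsTo_sliceAtZero (show (x, ξ) ∈ sliceDomain U from hx))
  exact tendsto_nhds_unique (hg0.tendsto.comp hpath)
    (tendsto_const_nhds.congr' (hvanish.mono fun t ht => ht.symm))

end ConicSupport

/-- local form of the evaluation morphism `e₀` of the paper: for
`g ∈ S_{r,c}(Ω_V^U)`, the evaluation `g₀(x,ξ) = g(x,ξ,0)` on `V × ℝ^q`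
(where `V = {x : (x,0) ∈ U}`) is `C^∞`, vanishes for `x` outside a compact subset of `V`,
and is Schwartz in `ξ` uniformly; i.e. `e₀` maps `S_{r,c}(Ω_V^U)` into `𝒮(V × ℝ^q)`. -/
theorem stmt11 {p q : ℕ} (U : Set ((Fin p → ℝ) × (Fin q → ℝ))) (hU : IsOpen U)
    (g : Pt p q → ℂ) (hg : MemSrc U g) :
    ContDiffOn ℝ (⊤ : ℕ∞) (fun w : Pt2 p q => g (w.1, w.2, 0))
      {w : Pt2 p q | (w.1, (0 : Fin q → ℝ)) ∈ U} ∧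
    (∃ K₀ : Set (Fin p → ℝ), IsCompact K₀ ∧
      (∀ x ∈ K₀, (x, (0 : Fin q → ℝ)) ∈ U) ∧
      ∀ (x : Fin p → ℝ) (ξ : Fin q → ℝ), (x, (0 : Fin q → ℝ)) ∈ U → x ∉ K₀ →
        g (x, ξ, 0) = 0) ∧
    ∀ (k : ℕ) (l : Fin p → ℕ) (α : Fin q → ℕ), ∃ C > 0,
      ∀ w ∈ {w : Pt2 p q | (w.1, (0 : Fin q → ℝ)) ∈ U},
        (1 + ‖w.2‖ ^ 2) ^ k *
          ‖mixedD2 {w : Pt2 p q | (w.1, (0 : Fin q → ℝ)) ∈ U} l α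
            (fun w : Pt2 p q => g (w.1, w.2, 0)) w‖ ≤ C := by
  obtain ⟨hsmooth, ⟨K, hK, hsupp⟩, hdecay⟩ := hg
  have hslice : IsZeroSliceOf U (fun w => g (w.1, w.2, 0)) g := ⟨hsmooth, fun _ _ => rfl⟩
  refine ⟨hsmooth.comp (sliceAtZero p q).contDiff.contDiffOn mapsTo_sliceAtZero,
    ⟨baseAtZero K, hK.isCompact_baseAtZero, fun x hx => hK.baseAtZero_subset hx,
      fun x ξ hx hxK => apply_zero_eq_zero_of_notMem_baseAtZero hU hsmooth.continuousOn
        hK.1.isClosed hsupp hx hxK ξ⟩,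
    fun k l α => ?_⟩
  obtain ⟨C, hC, hbound⟩ := hdecay k 0 l α
  refine ⟨C, hC, fun w hw => ?_⟩
  have hbound_w := hbound _ (mapsTo_sliceAtZero hw)
  rw [← hslice.mixedD2_eq hU l α hw] at hbound_w
  exact hbound_w
end
end

section
/- Let g ∈ S_{r,c}(Ω_V^U) and fix t ∈ (0,1]. Then the function e_t(g) : U → ℂ defined by e_t(g)(x,ζ) = g(x, ζ/t, t) is C^∞ on U and has compact support contained in U. -/
open Set MeasureTheory

noncomputable section

/-! For `0 < t ≤ 1` the map `(x, ζ) ↦ (x, ζ/t, t)` is smooth and sends `U` into `Ω_V^U`, so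
`e_t(g)` is smooth on `U`. Since the conic compact `K` is read in the coordinates `(x, tξ, t)`,
the support of `e_t(g)` lies in the slice of `K` at height `t`, which is compact and inside `U`. -/

section

variable {p N : ℕ}

def rescaleAt (t : ℝ) (w : (Fin p → ℝ) × (Fin N → ℝ)) : Pt p N := (w.1, t⁻¹ • w.2, t)

theorem contDiff_rescaleAt (t : ℝ) {n : WithTop ℕ∞} :
    ContDiff ℝ n (rescaleAt (p := p) (N := N) t) := by
  unfold rescaleAt
  fun_prop

theorem rescaleAt_mem_omega {U : Set ((Fin p → ℝ) × (Fin N → ℝ))} {t : ℝ}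
    (ht : t ∈ Ioc (0 : ℝ) 1) {w : (Fin p → ℝ) × (Fin N → ℝ)} (hw : w ∈ U) :
    rescaleAt t w ∈ Omega U := by
  refine ⟨Ioc_subset_Icc_self ht, ?_⟩
  simpa only [rescaleAt, smul_inv_smul₀ ht.1.ne'] using hw

def slice (K : Set (Pt p N)) (t : ℝ) : Set ((Fin p → ℝ) × (Fin N → ℝ)) :=
  (fun z : Pt p N => (z.1, z.2.1)) '' (K ∩ {z | z.2.2 = t})

theorem IsCompact.slice {K : Set (Pt p N)} (hK : IsCompact K) (t : ℝ) :
    IsCompact (slice K t) :=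
  (hK.inter_right (isClosed_eq continuous_snd.snd continuous_const)).image
    (continuous_fst.prodMk continuous_snd.fst)

theorem ConicCompact.slice_subset {U : Set ((Fin p → ℝ) × (Fin N → ℝ))} {K : Set (Pt p N)}
    (hK : ConicCompact U K) (t : ℝ) : slice K t ⊆ U := by
  rintro w ⟨z, ⟨hzK, -⟩, rfl⟩
  exact (hK.2.1 z hzK).1

theorem HasConicSupport.exists_compact_support_rescaleAt
    {U : Set ((Fin p → ℝ) × (Fin N → ℝ))} {g : Pt p N → ℂ} (hg : HasConicSupport U g)
    {t : ℝ} (ht : t ∈ Ioc (0 : ℝ) 1) :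
    ∃ K : Set ((Fin p → ℝ) × (Fin N → ℝ)), IsCompact K ∧ K ⊆ U ∧
      ∀ w ∈ U, w ∉ K → g (rescaleAt t w) = 0 := by
  obtain ⟨K, hK, hsupp⟩ := hg
  refine ⟨slice K t, hK.1.slice t, hK.slice_subset t, fun w hw hwK ↦ ?_⟩
  refine hsupp _ (rescaleAt_mem_omega ht hw) ht.1.ne' fun hmem ↦ hwK ?_
  refine ⟨_, ⟨hmem, rfl⟩, ?_⟩
  simp only [rescaleAt, smul_inv_smul₀ ht.1.ne']

end

theorem stmt12_general {p q : ℕ} (U : Set ((Fin p → ℝ) × (Fin q → ℝ)))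
    (g : Pt p q → ℂ) (hg : MemSrc U g) (t : ℝ) (ht : t ∈ Ioc (0 : ℝ) 1) :
    ContDiffOn ℝ (⊤ : ℕ∞) (fun w : (Fin p → ℝ) × (Fin q → ℝ) => g (w.1, t⁻¹ • w.2, t)) U ∧
    ∃ K : Set ((Fin p → ℝ) × (Fin q → ℝ)), IsCompact K ∧ K ⊆ U ∧
      ∀ w ∈ U, w ∉ K → g (w.1, t⁻¹ • w.2, t) = 0 :=
  ⟨hg.1.comp (contDiff_rescaleAt t).contDiffOn fun _ hw ↦ rescaleAt_mem_omega ht hw,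
    hg.2.1.exists_compact_support_rescaleAt ht⟩

/-- local form of the evaluation morphism `e_t`, `t ≠ 0`, of the paper:
for `g ∈ S_{r,c}(Ω_V^U)` and `t ∈ (0,1]`, the function `e_t(g)(x,ζ) = g(x, ζ/t, t)`
is `C^∞` on `U` and has compact support contained in `U`. -/
theorem stmt12 {p q : ℕ} (U : Set ((Fin p → ℝ) × (Fin q → ℝ))) (hU : IsOpen U)
    (g : Pt p q → ℂ) (hg : MemSrc U g) (t : ℝ) (ht : t ∈ Ioc (0 : ℝ) 1) :
    ContDiffOn ℝ (⊤ : ℕ∞) (fun w : (Fin p → ℝ) × (Fin q → ℝ) => g (w.1, t⁻¹ • w.2, t)) U ∧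
    ∃ K : Set ((Fin p → ℝ) × (Fin q → ℝ)), IsCompact K ∧ K ⊆ U ∧
      ∀ w ∈ U, w ∉ K → g (w.1, t⁻¹ • w.2, t) = 0 :=
  stmt12_general U g hg t ht
end
end
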